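/- arXiv:1410.4276 — 2 statements merged into one kernel-verified Lean document; each statement's English description precedes it below -/
import Mathlib

section
/- Fix δ ∈ (0, 1/2). For every even m ≥ 8 there exist an m×m real orthogonal matrix T_m = (γ_{ij}) and eigenvalues λ_{1,m} ≥ λ_{2,m} ≥ ... ≥ λ_{m,m} > 0 with Σ_{j=1}^m λ_{j,m} = m, such that, with k = m/2 and σ_{i,m} := Σ_{j=k+1}^m λ_{j,m} γ_{ij}², the following hold: (1) liminf_{m→∞} λ_{m,m} > 0; (2) m^{-1}·√(Σ_{j=k+1}^m λ_{j,m}²) ≤ m^{-δ} for every such m; (3) for each m, σ_{i,m} > 0 for every 1 ≤ i ≤ m−1, but σ_{m,m} = 0; (4) lim_{m→∞} σ_{1,m} = 0 and liminf_{m→∞} σ_{k+1,m} > 0 (equivalently, with a_{i,m} = σ_{i,m}^{-1/2}, one has a_{i,m} < ∞ for 1 ≤ i ≤ m−1, a_{m,m} = ∞, lim_{m→∞} a_{1,m} = ∞, and limsup_{m→∞} a_{k+1,m} < ∞). -/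
/-!
Take all eigenvalues equal to `1`, so that `σ_i` is the squared norm of the second half of the
`i`-th row of `T`. For `T` take `k = m / 2` commuting plane rotations, the `a`-th one turning
coordinate `a` into coordinate `k + a` by an angle with `sin² = (a + 1) / k`. Then
`σ_a = (a + 1) / k` and `σ_{k+a} = 1 - (a + 1) / k`: positive except at the last coordinate,
`σ_0 = 1 / k → 0` and `σ_k = 1 - 1 / k ≥ 3 / 4`. The tail bound is `m⁻¹ √(m / 2) ≤ m ^ (-1/2)`.
-/

open Matrix Finset

section BlockRotation

variable {ι : Type*} [Fintype ι] [DecidableEq ι]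

def blockRotation (c s : ι → ℝ) : Matrix (ι ⊕ ι) (ι ⊕ ι) ℝ :=
  fromBlocks (diagonal c) (-diagonal s) (diagonal s) (diagonal c)

theorem blockRotation_transpose_mul_self {c s : ι → ℝ} (h : ∀ a, c a ^ 2 + s a ^ 2 = 1) :
    (blockRotation c s)ᵀ * blockRotation c s = 1 := by
  have hsq : ∀ a, s a * s a + c a * c a = 1 := fun a => by linear_combination h a
  rw [blockRotation, fromBlocks_transpose, fromBlocks_multiply, ← fromBlocks_one]
  simp only [diagonal_transpose, transpose_neg, diagonal_mul_diagonal, Matrix.neg_mul,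
    Matrix.mul_neg, neg_neg, mul_comm (s _) (c _), neg_add_cancel, diagonal_add, hsq,
    add_comm (c _ * c _), diagonal_one]

theorem sum_blockRotation_inl_inr_sq (c s : ι → ℝ) (a : ι) :
    ∑ b, blockRotation c s (.inl a) (.inr b) ^ 2 = s a ^ 2 := by
  simp [blockRotation, diagonal_apply]

theorem sum_blockRotation_inr_inr_sq (c s : ι → ℝ) (a : ι) :
    ∑ b, blockRotation c s (.inr a) (.inr b) ^ 2 = c a ^ 2 := by
  simp [blockRotation, diagonal_apply]

end BlockRotation

def evenSplit {m k : ℕ} (h : k + k = m) : Fin k ⊕ Fin k ≃ Fin m :=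
  finSumFinEquiv.trans (finCongr h)

theorem sum_filter_half_le_eq_sum_inr {m : ℕ} (h : m / 2 + m / 2 = m) (f : Fin m → ℝ) :
    ∑ j ∈ univ.filter (fun j : Fin m => m / 2 ≤ (j : ℕ)), f j =
      ∑ b : Fin (m / 2), f (evenSplit h (.inr b)) := by
  rw [sum_filter, ← Equiv.sum_comp (evenSplit h), Fintype.sum_sum_type]
  simp only [evenSplit, Equiv.trans_apply, finSumFinEquiv_apply_left, finSumFinEquiv_apply_right,
    finCongr_apply, Fin.val_cast, Fin.val_castAdd, Fin.val_natAdd, le_add_iff_nonneg_right, zero_le,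
    if_true]
  rw [add_eq_right]
  exact sum_eq_zero fun a _ => if_neg (by omega)

noncomputable def rotationWeight (k : ℕ) (a : Fin k) : ℝ := ((a : ℝ) + 1) / k

theorem rotationWeight_nonneg (k : ℕ) (a : Fin k) : 0 ≤ rotationWeight k a := by
  unfold rotationWeight; positivity

theorem rotationWeight_le_one (k : ℕ) (a : Fin k) : rotationWeight k a ≤ 1 := by
  have hk : ((a : ℕ) : ℝ) + 1 ≤ k := by exact_mod_cast a.isLt
  exact div_le_one_of_le₀ hk (Nat.cast_nonneg k)

noncomputable def halfRotation (m : ℕ) : Matrix (Fin m) (Fin m) ℝ :=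
  if h : m / 2 + m / 2 = m then
    (blockRotation (fun a => √(1 - rotationWeight (m / 2) a))
      (fun a => √(rotationWeight (m / 2) a))).submatrix (evenSplit h).symm (evenSplit h).symm
  else 1

theorem halfRotation_transpose_mul_self {m : ℕ} (h : m / 2 + m / 2 = m) :
    (halfRotation m)ᵀ * halfRotation m = 1 := by
  rw [halfRotation, dif_pos h, transpose_submatrix, submatrix_mul_equiv,
    blockRotation_transpose_mul_self, submatrix_one_equiv]
  intro a
  rw [Real.sq_sqrt (sub_nonneg.2 (rotationWeight_le_one _ a)),
    Real.sq_sqrt (rotationWeight_nonneg _ a), sub_add_cancel]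

theorem sum_tail_halfRotation_sq {m : ℕ} (h : m / 2 + m / 2 = m) (i : Fin m) :
    ∑ j ∈ univ.filter (fun j : Fin m => m / 2 ≤ (j : ℕ)), halfRotation m i j ^ 2 =
      if (i : ℕ) < m / 2 then ((i : ℝ) + 1) / (m / 2 : ℕ) else ((m : ℝ) - i - 1) / (m / 2 : ℕ) := by
  have hm : ((m / 2 : ℕ) : ℝ) + (m / 2 : ℕ) = m := by exact_mod_cast h
  rw [sum_filter_half_le_eq_sum_inr h]
  obtain ⟨x, rfl⟩ := (evenSplit h).surjective i
  simp only [halfRotation, dif_pos h, submatrix_apply, Equiv.symm_apply_apply]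
  rcases x with a | a
  · rw [sum_blockRotation_inl_inr_sq, Real.sq_sqrt (rotationWeight_nonneg _ a)]
    simp [evenSplit, rotationWeight]
  · rw [sum_blockRotation_inr_inr_sq, Real.sq_sqrt (sub_nonneg.2 (rotationWeight_le_one _ a))]
    simp [evenSplit, rotationWeight]
    have hk : ((m / 2 : ℕ) : ℝ) ≠ 0 := Nat.cast_ne_zero.2 a.pos.ne'
    rw [← hm]
    field_simp
    ring

theorem inv_mul_sqrt_le_rpow_neg {x y δ : ℝ} (hx : 1 ≤ x) (hyx : y ≤ x) (hδ : δ ≤ 1 / 2) :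
    x⁻¹ * √y ≤ x ^ (-δ) :=
  calc x⁻¹ * √y ≤ x ^ (-1 : ℝ) * x ^ (1 / 2 : ℝ) := by
        rw [Real.rpow_neg_one, ← Real.sqrt_eq_rpow]
        gcongr
    _ = x ^ (-(1 / 2) : ℝ) := by rw [← Real.rpow_add (by linarith)]; norm_num
    _ ≤ x ^ (-δ) := Real.rpow_le_rpow_of_exponent_le hx (by linarith)

theorem stmt4_general (δ : ℝ) (hδ1 : δ < 1 / 2) :
    ∃ (T : (m : ℕ) → Matrix (Fin m) (Fin m) ℝ) (lam : (m : ℕ) → Fin m → ℝ),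
      (∀ m : ℕ, 8 ≤ m → Even m →
        (T m)ᵀ * T m = 1 ∧
        (∀ i j : Fin m, i ≤ j → lam m j ≤ lam m i) ∧
        (∀ j : Fin m, 0 < lam m j) ∧
        (∑ j : Fin m, lam m j) = (m : ℝ) ∧
        -- (2) the tail eigenvalue bound with k = m/2
        (m : ℝ)⁻¹ *
            Real.sqrt (∑ j ∈ univ.filter (fun j : Fin m => m / 2 ≤ (j : ℕ)), lam m j ^ 2) ≤
          (m : ℝ) ^ (-δ) ∧
        -- (3) σ_{i,m} > 0 for 1 ≤ i ≤ m − 1 but σ_{m,m} = 0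
        (∀ i : Fin m, (i : ℕ) < m - 1 →
          0 < ∑ j ∈ univ.filter (fun j : Fin m => m / 2 ≤ (j : ℕ)), lam m j * T m i j ^ 2) ∧
        (∀ i : Fin m, (i : ℕ) = m - 1 →
          (∑ j ∈ univ.filter (fun j : Fin m => m / 2 ≤ (j : ℕ)), lam m j * T m i j ^ 2) = 0)) ∧
      -- (1) liminf_{m→∞} λ_{m,m} > 0 along even m
      (∃ c : ℝ, 0 < c ∧ ∃ M : ℕ, ∀ m : ℕ, M ≤ m → 8 ≤ m → Even m →
        ∀ i : Fin m, (i : ℕ) = m - 1 → c ≤ lam m i) ∧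
      -- (4) lim_{m→∞} σ_{1,m} = 0 along even m
      (∀ ε : ℝ, 0 < ε → ∃ M : ℕ, ∀ m : ℕ, M ≤ m → 8 ≤ m → Even m →
        ∀ i : Fin m, (i : ℕ) = 0 →
          (∑ j ∈ univ.filter (fun j : Fin m => m / 2 ≤ (j : ℕ)), lam m j * T m i j ^ 2) < ε) ∧
      -- (4) liminf_{m→∞} σ_{k+1,m} > 0 along even m (0-based index k = m/2)
      (∃ c : ℝ, 0 < c ∧ ∃ M : ℕ, ∀ m : ℕ, M ≤ m → 8 ≤ m → Even m →
        ∀ i : Fin m, (i : ℕ) = m / 2 →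
          c ≤ ∑ j ∈ univ.filter (fun j : Fin m => m / 2 ≤ (j : ℕ)), lam m j * T m i j ^ 2) := by
  have half : ∀ m : ℕ, Even m → m / 2 + m / 2 = m := by rintro m ⟨k, rfl⟩; omega
  refine ⟨halfRotation, fun _ _ => 1, fun m hm8 hm => ?_, ⟨1, one_pos, 0, fun _ _ _ _ _ _ => le_rfl⟩,
    fun ε hε => ?_, ⟨1 / 2, one_half_pos, 0, fun m _ hm8 hm i hi => ?_⟩⟩
  · have hk : (4 : ℝ) ≤ (m / 2 : ℕ) := by exact_mod_cast (by omega : 4 ≤ m / 2)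
    simp only [one_pow, one_mul, sum_tail_halfRotation_sq (half m hm), sum_const, nsmul_eq_mul,
      mul_one]
    refine ⟨halfRotation_transpose_mul_self (half m hm), fun _ _ _ => le_rfl, fun _ => one_pos,
      by simp, ?_, fun i hi => ?_, fun i hi => ?_⟩
    · exact inv_mul_sqrt_le_rpow_neg (by exact_mod_cast (by omega : 1 ≤ m))
        (by exact_mod_cast (card_filter_le _ _).trans (card_fin m).le) hδ1.le
    · have : (i : ℝ) + 1 < m := by exact_mod_cast (by omega : (i : ℕ) + 1 < m)
      split_ifs <;> apply div_pos <;> linarith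
    · have : (i : ℝ) + 1 = m := by exact_mod_cast (by omega : (i : ℕ) + 1 = m)
      rw [if_neg (by omega)]
      simp [← this]
  · obtain ⟨N, hN⟩ := exists_nat_gt ε⁻¹
    refine ⟨2 * N + 2, fun m hM _ hm i hi => ?_⟩
    have hkN : (N : ℝ) < (m / 2 : ℕ) := by exact_mod_cast (by omega : N < m / 2)
    simp only [one_mul, sum_tail_halfRotation_sq (half m hm), hi, if_pos (by omega : 0 < m / 2),
      Nat.cast_zero, zero_add, one_div]
    exact inv_lt_of_inv_lt₀ hε (hN.trans hkN)
  · have hk : (4 : ℝ) ≤ (m / 2 : ℕ) := by exact_mod_cast (by omega : 4 ≤ m / 2)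
    have hm' : ((m / 2 : ℕ) : ℝ) + (m / 2 : ℕ) = m := by exact_mod_cast half m hm
    simp only [one_mul, sum_tail_halfRotation_sq (half m hm), hi, lt_irrefl, if_false]
    rw [le_div_iff₀ (by positivity)]
    linarith

/-- For fixed `δ ∈ (0, 1/2)` there is, for every even `m ≥ 8`, an orthogonal
matrix `T_m` and positive nonincreasing eigenvalues summing to `m` such that, with `k = m/2`
and residual variances `σ_{i,m}`: (1) `liminf λ_{m,m} > 0`; (2) the tail bound holds;
(3) `σ_{i,m} > 0` for `1 ≤ i ≤ m − 1` (0-based: `(i : ℕ) < m − 1`) but `σ_{m,m} = 0`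
(0-based index `m − 1`); (4) `lim σ_{1,m} = 0` (0-based index `0`) and
`liminf σ_{k+1,m} > 0` (0-based index `k = m/2`), with the asymptotics along even `m → ∞`. -/
theorem stmt4 (δ : ℝ) (hδ0 : 0 < δ) (hδ1 : δ < 1 / 2) :
    ∃ (T : (m : ℕ) → Matrix (Fin m) (Fin m) ℝ) (lam : (m : ℕ) → Fin m → ℝ),
      (∀ m : ℕ, 8 ≤ m → Even m →
        (T m)ᵀ * T m = 1 ∧
        (∀ i j : Fin m, i ≤ j → lam m j ≤ lam m i) ∧
        (∀ j : Fin m, 0 < lam m j) ∧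
        (∑ j : Fin m, lam m j) = (m : ℝ) ∧
        -- (2) the tail eigenvalue bound with k = m/2
        (m : ℝ)⁻¹ *
            Real.sqrt (∑ j ∈ univ.filter (fun j : Fin m => m / 2 ≤ (j : ℕ)), lam m j ^ 2) ≤
          (m : ℝ) ^ (-δ) ∧
        -- (3) σ_{i,m} > 0 for 1 ≤ i ≤ m − 1 but σ_{m,m} = 0
        (∀ i : Fin m, (i : ℕ) < m - 1 →
          0 < ∑ j ∈ univ.filter (fun j : Fin m => m / 2 ≤ (j : ℕ)), lam m j * T m i j ^ 2) ∧
        (∀ i : Fin m, (i : ℕ) = m - 1 →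
          (∑ j ∈ univ.filter (fun j : Fin m => m / 2 ≤ (j : ℕ)), lam m j * T m i j ^ 2) = 0)) ∧
      -- (1) liminf_{m→∞} λ_{m,m} > 0 along even m
      (∃ c : ℝ, 0 < c ∧ ∃ M : ℕ, ∀ m : ℕ, M ≤ m → 8 ≤ m → Even m →
        ∀ i : Fin m, (i : ℕ) = m - 1 → c ≤ lam m i) ∧
      -- (4) lim_{m→∞} σ_{1,m} = 0 along even m
      (∀ ε : ℝ, 0 < ε → ∃ M : ℕ, ∀ m : ℕ, M ≤ m → 8 ≤ m → Even m →
        ∀ i : Fin m, (i : ℕ) = 0 →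
          (∑ j ∈ univ.filter (fun j : Fin m => m / 2 ≤ (j : ℕ)), lam m j * T m i j ^ 2) < ε) ∧
      -- (4) liminf_{m→∞} σ_{k+1,m} > 0 along even m (0-based index k = m/2)
      (∃ c : ℝ, 0 < c ∧ ∃ M : ℕ, ∀ m : ℕ, M ≤ m → 8 ≤ m → Even m →
        ∀ i : Fin m, (i : ℕ) = m / 2 →
          c ≤ ∑ j ∈ univ.filter (fun j : Fin m => m / 2 ≤ (j : ℕ)), lam m j * T m i j ^ 2) :=
  stmt4_general δ hδ1
end

section
/- Let {X_n}_{n=1}^∞ be a sequence of real-valued random variables on a probability space such that E[|X_n|²] ≤ 1 for every n and |X_n| ≤ 1 almost surely for every n. If Σ_{N=1}^∞ N^{-1}·E[|N^{-1} Σ_{n=1}^N X_n|²] < ∞, then N^{-1} Σ_{n=1}^N X_n → 0 almost surely as N → ∞. -/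
/-
Put `S_N = (N + 1)⁻¹ ∑_{n ≤ N} X_n`. The terms are bounded, hence integrable, so the
hypothesis says that `∑_N (N + 1)⁻¹ |S_N|²` has finite expectation, and therefore almost surely
`∑_N (N + 1)⁻¹ |S_N(ω)|² < ∞`.
The rest is deterministic: the partial sums move by at most `1` per step, so if `|S_N| ≥ ε`
then `|S_M| ≥ ε / 4` for the next `≈ ε N / 2` indices `M`, and these contribute at least
`ε³ / 64` to the series. Infinitely many such `N` would contradict convergence.
-/

open MeasureTheory ProbabilityTheory Filter Finset

theorem abs_inv_mul_sum_range_le_one {x : ℕ → ℝ} (hx : ∀ n, |x n| ≤ 1) (N : ℕ) :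
    |((N : ℝ) + 1)⁻¹ * ∑ n ∈ range (N + 1), x n| ≤ 1 := by
  have hN : (0 : ℝ) < N + 1 := by positivity
  have hsum : |∑ n ∈ range (N + 1), x n| ≤ N + 1 := by
    calc |∑ n ∈ range (N + 1), x n| ≤ ∑ n ∈ range (N + 1), |x n| := abs_sum_le_sum_abs _ _
      _ ≤ (range (N + 1)).card • (1 : ℝ) := sum_le_card_nsmul _ _ _ fun n _ => hx n
      _ = N + 1 := by simp
  rwa [abs_mul, abs_of_pos (inv_pos.2 hN), inv_mul_le_iff₀ hN, mul_one]

theorem ae_summable_norm_of_summable_integral_norm {α E ι : Type*} [MeasurableSpace α]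
    {μ : Measure α} [NormedAddCommGroup E] [Countable ι] {F : ι → α → E}
    (hF_int : ∀ i, Integrable (F i) μ) (hF_sum : Summable fun i => ∫ a, ‖F i a‖ ∂μ) :
    ∀ᵐ a ∂μ, Summable fun i => ‖F i a‖ := by
  have hfin : ∫⁻ a, ∑' i, ‖F i a‖ₑ ∂μ ≠ ⊤ := by
    rw [lintegral_tsum fun i => (hF_int i).1.enorm]
    simp_rw [← ofReal_integral_norm_eq_lintegral_enorm (hF_int _)]
    rw [← ENNReal.ofReal_tsum_of_nonneg (fun i => integral_nonneg fun a => norm_nonneg _) hF_sum]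
    exact ENNReal.ofReal_ne_top
  filter_upwards [ae_lt_top' (AEMeasurable.tsum fun i => (hF_int i).1.enorm) hfin] with a ha
  exact NNReal.summable_coe.2 (ENNReal.tsum_coe_ne_top_iff_summable.1 ha.ne)

theorem abs_sub_le_of_abs_succ_sub_le {u : ℕ → ℝ} (hu : ∀ n, |u (n + 1) - u n| ≤ 1)
    {N M : ℕ} (hNM : N ≤ M) : |u M - u N| ≤ M - N := by
  induction M, hNM using Nat.le_induction with
  | base => simp
  | succ M hNM ih =>
    calc |u (M + 1) - u N| ≤ |u (M + 1) - u M| + |u M - u N| := abs_sub_le _ _ _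
      _ ≤ 1 + (M - N) := add_le_add (hu M) ih
      _ = ((M + 1 : ℕ) : ℝ) - N := by push_cast; ring

theorem le_inv_mul_abs_inv_mul_sq {n m v ε : ℝ} (hn : 0 < n) (hnm : n ≤ m) (hm : m ≤ 2 * n)
    (hv : n * ε / 2 ≤ |v|) (hε : 0 ≤ ε) :
    ε ^ 2 / (32 * n) ≤ m⁻¹ * |m⁻¹ * v| ^ 2 := by
  have hm0 : 0 < m := hn.trans_le hnm
  calc ε ^ 2 / (32 * n) = (n * ε / 2) ^ 2 / (2 * n) ^ 3 := by field_simp; ring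
    _ ≤ |v| ^ 2 / m ^ 3 := by gcongr
    _ = m⁻¹ * |m⁻¹ * v| ^ 2 := by
      rw [abs_mul, abs_of_pos (inv_pos.2 hm0)]; field_simp

theorem exists_le_sum_Ico_of_le_abs {u : ℕ → ℝ} (hu : ∀ n, |u (n + 1) - u n| ≤ 1) {ε : ℝ}
    (hε0 : 0 < ε) (hε1 : ε ≤ 1) {N : ℕ} (hN : ε ≤ |((N : ℝ) + 1)⁻¹ * u N|) :
    ∃ L, ε ^ 3 / 64 ≤ ∑ M ∈ Ico N (N + L), ((M : ℝ) + 1)⁻¹ * |((M : ℝ) + 1)⁻¹ * u M| ^ 2 := by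
  -- `u` moves by at most one per step, so on the `K + 1 ≈ ε (N + 1) / 2` indices after `N`
  -- the mean stays above `ε / 4` and each term is at least `ε ^ 2 / (32 (N + 1))`.
  set n : ℝ := (N : ℝ) + 1
  have hn : 0 < n := by positivity
  set K := ⌊n * ε / 2⌋₊
  have hK : (K : ℝ) ≤ n * ε / 2 := Nat.floor_le (by positivity)
  have huN : n * ε ≤ |u N| := by
    rwa [abs_mul, abs_of_pos (inv_pos.2 hn), ← div_eq_inv_mul, le_div_iff₀' hn] at hN
  refine ⟨K + 1, ?_⟩
  have hterm : ∀ M ∈ Ico N (N + (K + 1)),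
      ε ^ 2 / (32 * n) ≤ ((M : ℝ) + 1)⁻¹ * |((M : ℝ) + 1)⁻¹ * u M| ^ 2 := by
    intro M hM
    obtain ⟨hNM, hMK⟩ := mem_Ico.1 hM
    have hMN : (M : ℝ) - N ≤ K := by
      rw [sub_le_iff_le_add]; exact_mod_cast (by omega : M ≤ K + N)
    have hdrift := abs_sub_le_of_abs_succ_sub_le hu hNM
    apply le_inv_mul_abs_inv_mul_sq hn (by simp [n, hNM]) _ _ hε0.le
    · nlinarith
    · linarith [abs_sub_abs_le_abs_sub (u N) (u M), abs_sub_comm (u M) (u N)]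
  calc ε ^ 3 / 64 ≤ (K + 1 : ℕ) * (ε ^ 2 / (32 * n)) := by
        have := Nat.lt_floor_add_one (n * ε / 2)
        push_cast
        rw [show ε ^ 3 / 64 = n * ε / 2 * (ε ^ 2 / (32 * n)) by field_simp; ring]
        gcongr
    _ ≤ _ := by
        simpa using card_nsmul_le_sum _ _ _ hterm

theorem sum_Ico_le_tsum_nat_add {b : ℕ → ℝ} (hb : ∀ n, 0 ≤ b n) (hs : Summable b) (N L : ℕ) :
    ∑ M ∈ Ico N (N + L), b M ≤ ∑' k, b (k + N) := by
  rw [sum_Ico_eq_sum_range, Nat.add_sub_cancel_left]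
  simp_rw [add_comm N]
  exact ((summable_nat_add_iff N).2 hs).sum_le_tsum _ fun k _ => hb _

theorem tendsto_inv_mul_zero_of_summable {u : ℕ → ℝ} (hu : ∀ n, |u (n + 1) - u n| ≤ 1)
    (hs : Summable fun N : ℕ => ((N : ℝ) + 1)⁻¹ * |((N : ℝ) + 1)⁻¹ * u N| ^ 2) :
    Tendsto (fun N : ℕ => ((N : ℝ) + 1)⁻¹ * u N) atTop (nhds 0) := by
  set b : ℕ → ℝ := fun M => ((M : ℝ) + 1)⁻¹ * |((M : ℝ) + 1)⁻¹ * u M| ^ 2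
  have hsmall : ∀ ε, 0 < ε → ε ≤ 1 → ∀ᶠ N : ℕ in atTop, |((N : ℝ) + 1)⁻¹ * u N| < ε := by
    intro ε hε0 hε1
    have htail := (tendsto_sum_nat_add b).eventually_lt_const (by positivity : 0 < ε ^ 3 / 64)
    filter_upwards [htail] with N hN
    by_contra! hεN
    obtain ⟨L, hL⟩ := exists_le_sum_Ico_of_le_abs hu hε0 hε1 hεN
    exact (hL.trans (sum_Ico_le_tsum_nat_add (fun M => by positivity) hs N L)).not_gt hN
  refine Metric.tendsto_nhds.2 fun ε hε => ?_
  filter_upwards [hsmall (min ε 1) (lt_min hε one_pos) (min_le_right _ _)] with N hN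
  rw [Real.dist_0_eq_abs]
  exact hN.trans_le (min_le_left _ _)

theorem stmt5_general {Ω : Type*} [MeasureSpace Ω] [IsProbabilityMeasure (ℙ : Measure Ω)]
    (X : ℕ → Ω → ℝ) (hmeas : ∀ n, Measurable (X n))
    (hbd : ∀ n, ∀ᵐ ω ∂(ℙ : Measure Ω), |X n ω| ≤ 1)
    (hsum : Summable fun N : ℕ =>
      ((N : ℝ) + 1)⁻¹ * ∫ ω, |((N : ℝ) + 1)⁻¹ * ∑ n ∈ range (N + 1), X n ω| ^ 2 ∂(ℙ : Measure Ω)) :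
    ∀ᵐ ω ∂(ℙ : Measure Ω), Tendsto (fun N : ℕ => ((N : ℝ) + 1)⁻¹ * ∑ n ∈ range (N + 1), X n ω)
      atTop (nhds 0) := by
  set F : ℕ → Ω → ℝ := fun N ω =>
    ((N : ℝ) + 1)⁻¹ * |((N : ℝ) + 1)⁻¹ * ∑ n ∈ range (N + 1), X n ω| ^ 2
  have hF_nonneg : ∀ N ω, 0 ≤ F N ω := fun N ω => by positivity
  have hXbd : ∀ᵐ ω ∂(ℙ : Measure Ω), ∀ n, |X n ω| ≤ 1 := ae_all_iff.2 hbd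
  have hF_int : ∀ N, Integrable (F N) ℙ := by
    refine fun N => Integrable.of_bound (by fun_prop) 1 ?_
    filter_upwards [hXbd] with ω hω
    rw [Real.norm_of_nonneg (hF_nonneg N ω)]
    exact mul_le_one₀ (inv_le_one_of_one_le₀ (by simp)) (by positivity)
      (pow_le_one₀ (abs_nonneg _) (abs_inv_mul_sum_range_le_one hω N))
  have hF_sum : Summable fun N => ∫ ω, ‖F N ω‖ ∂(ℙ : Measure Ω) := by
    simpa only [Real.norm_of_nonneg (hF_nonneg _ _), F, integral_const_mul] using hsum
  filter_upwards [ae_summable_norm_of_summable_integral_norm hF_int hF_sum, hXbd] with ω hω hXω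
  refine tendsto_inv_mul_zero_of_summable (fun n => ?_) ?_
  · simpa [sum_range_succ] using hXω (n + 1)
  · simpa only [Real.norm_of_nonneg (hF_nonneg _ ω)] using hω

/-- Lyons's SLLN: If `{X_n}` are real random variables with `E[|X_n|²] ≤ 1`,
`|X_n| ≤ 1` a.s., and `Σ_N N⁻¹ E[|N⁻¹ Σ_{n≤N} X_n|²] < ∞`, then `N⁻¹ Σ_{n≤N} X_n → 0` a.s.
The sequence is indexed by `ℕ` starting at `0`, with `N + 1` playing the role of `N ≥ 1`
and `Finset.range (N + 1)` the role of `{1, …, N}`. -/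
theorem stmt5 {Ω : Type*} [MeasureSpace Ω] [IsProbabilityMeasure (ℙ : Measure Ω)]
    (X : ℕ → Ω → ℝ) (hmeas : ∀ n, Measurable (X n))
    (hL2 : ∀ n, (∫ ω, |X n ω| ^ 2 ∂(ℙ : Measure Ω)) ≤ 1)
    (hbd : ∀ n, ∀ᵐ ω ∂(ℙ : Measure Ω), |X n ω| ≤ 1)
    (hsum : Summable fun N : ℕ =>
      ((N : ℝ) + 1)⁻¹ * ∫ ω, |((N : ℝ) + 1)⁻¹ * ∑ n ∈ range (N + 1), X n ω| ^ 2 ∂(ℙ : Measure Ω)) :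
    ∀ᵐ ω ∂(ℙ : Measure Ω), Tendsto (fun N : ℕ => ((N : ℝ) + 1)⁻¹ * ∑ n ∈ range (N + 1), X n ω)
      atTop (nhds 0) :=
  stmt5_general X hmeas hbd hsum
end
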